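/- arXiv:1202.3552 — 4 statements merged into one kernel-verified Lean document; each statement's English description precedes it below -/
import Mathlib

section
/- Every connected bialgebra is a Hopf algebra, i.e. the identity map has a convolution inverse S, and S satisfies S(x) = −x − Σ S(x′)x″ on the augmentation ideal, where Δ̃(x) = Σ x′ ⊗ x″ is the reduced coproduct. -/
/-!
In the convolution algebra write `id = 1 - U` with `U = u ∘ ε - id`, which kills `1`. Since
`Δ (F n) ⊆ ∑ F i ⊗ F (n - i)`, induction on `n` shows that `U ^ (n + 1)` vanishes on `F n`.
Hence the geometric series `S = ∑ U ^ k` is pointwise finite and agrees with its `n`-th partial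
sum on `F n`. A convolution product evaluated on `F n` only sees the restrictions of its factors
to `F n`, so `(∑_{k ≤ n} U ^ k) ⋆ (1 - U) = 1 - U ^ (n + 1) = (1 - U) ⋆ ∑_{k ≤ n} U ^ k` makes
`S` a two-sided inverse of `id`. The recursion on `ker ε` is `(S ⋆ id) x = ε x = 0` expanded
along `Δ x = Δ̃ x + 1 ⊗ x + x ⊗ 1`, using `S 1 = 1`.
-/

open TensorProduct

variable {K : Type*} [Field K]
variable {H : Type*} [Ring H] [Bialgebra K H]

/-- The convolution product on `End(H)`. -/
noncomputable def conv (f g : H →ₗ[K] H) : H →ₗ[K] H :=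
  (LinearMap.mul' K H) ∘ₗ (TensorProduct.map f g) ∘ₗ (Coalgebra.comul (R := K))

/-- The convolution unit `e = u ∘ ε`. -/
noncomputable def convUnit : H →ₗ[K] H :=
  (Algebra.linearMap K H) ∘ₗ (Coalgebra.counit (R := K))

/-- The image `p ⊗ q` of a pair of submodules inside `H ⊗ H`. -/
noncomputable def tensorSub (p q : Submodule K H) : Submodule K (H ⊗[K] H) :=
  LinearMap.range (TensorProduct.map p.subtype q.subtype)

open WithConv

namespace LinearMap

variable {ι R M N : Type*} [Semiring R] [AddCommMonoid M] [Module R M]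
  [AddCommMonoid N] [Module R N]

noncomputable def locallyFiniteSum (f : ι → M →ₗ[R] N)
    (hf : ∀ x, (fun i ↦ f i x).HasFiniteSupport) : M →ₗ[R] N where
  toFun x := ∑ᶠ i, f i x
  map_add' x y := by simp only [map_add]; exact finsum_add_distrib (hf x) (hf y)
  map_smul' c x := by simp only [map_smul, RingHom.id_apply]; exact (smul_finsum' c (hf x)).symm

lemma locallyFiniteSum_apply_eq_sum {f : ι → M →ₗ[R] N}
    {hf : ∀ x, (fun i ↦ f i x).HasFiniteSupport} {x : M} {s : Finset ι}
    (hs : ∀ i ∉ s, f i x = 0) : locallyFiniteSum f hf x = (∑ i ∈ s, f i) x := by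
  rw [sum_apply]
  refine finsum_eq_finsetSum_of_support_subset _ fun i hi ↦ ?_
  by_contra h
  exact hi (hs i h)

end LinearMap

section ReducedComul

variable {R A : Type*} [CommRing R] [Ring A] [Bialgebra R A]

variable (R) in
noncomputable def reducedComul (x : A) : A ⊗[R] A :=
  Coalgebra.comul (R := R) x - 1 ⊗ₜ x - x ⊗ₜ 1

lemma apply_eq_neg_sub_mul'_map_reducedComul {S : A →ₗ[R] A}
    (hS : toConv S * toConv LinearMap.id = 1) {x : A} (hx : Coalgebra.counit (R := R) x = 0) :
    S x = -x - LinearMap.mul' R A (TensorProduct.map S LinearMap.id (reducedComul R x)) := by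
  have hSx :
      LinearMap.mul' R A (TensorProduct.map S LinearMap.id (Coalgebra.comul (R := R) x)) = 0 := by
    simpa [hx] using congr($hS x)
  have hS1 : S 1 = 1 := by simpa [Algebra.TensorProduct.one_def] using congr($hS 1)
  simp [reducedComul, hSx, hS1]

end ReducedComul

section ConnectedFiltration

def IsComulFiltered (F : ℕ → Submodule K H) : Prop :=
  ∀ n, ∀ x ∈ F n,
    Coalgebra.comul (R := K) x ∈ ∑ i ∈ Finset.range (n + 1), tensorSub (F i) (F (n - i))

variable (K H) in
noncomputable def oneSubId : WithConv (H →ₗ[K] H) := 1 - toConv LinearMap.id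

variable {F : ℕ → Submodule K H}

lemma tensorSub_le_ker_iff {M : Type*} [AddCommMonoid M] [Module K M] {p q : Submodule K H}
    {φ : H ⊗[K] H →ₗ[K] M} :
    tensorSub p q ≤ LinearMap.ker φ ↔ ∀ a ∈ p, ∀ b ∈ q, φ (a ⊗ₜ b) = 0 := by
  rw [tensorSub, LinearMap.range_le_ker_iff]
  constructor
  · intro h a ha b hb
    exact congr($h (⟨a, ha⟩ ⊗ₜ ⟨b, hb⟩))
  · intro h
    ext a b
    exact h a a.2 b b.2

lemma IsComulFiltered.map_comul_eq_zero {M : Type*} [AddCommMonoid M] [Module K M]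
    (hcomul : IsComulFiltered F) {N : ℕ} {x : H} (hx : x ∈ F N) (φ : H ⊗[K] H →ₗ[K] M)
    (hφ : ∀ i ≤ N, ∀ a ∈ F i, ∀ b ∈ F (N - i), φ (a ⊗ₜ b) = 0) :
    φ (Coalgebra.comul (R := K) x) = 0 :=
  Finset.sum_induction _ (· ≤ LinearMap.ker φ)
    (fun _ _ hp hq ↦ (Submodule.add_eq_sup _ _).trans_le (sup_le hp hq)) bot_le
    (fun i hi ↦ tensorSub_le_ker_iff.mpr (hφ i (Finset.mem_range_succ_iff.mp hi)))
    (hcomul N x hx)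

lemma IsComulFiltered.convMul_apply_eq_of_eqOn {A : Type*} [Ring A] [Algebra K A]
    (hmono : Monotone F) (hcomul : IsComulFiltered F) {N : ℕ}
    {f f' g g' : WithConv (H →ₗ[K] A)}
    (hf : Set.EqOn f f' (F N)) (hg : Set.EqOn g g' (F N)) {x : H} (hx : x ∈ F N) :
    (f * g) x = (f' * g') x := by
  rw [← sub_eq_zero]
  refine hcomul.map_comul_eq_zero hx
    (LinearMap.mul' K A ∘ₗ TensorProduct.map f.ofConv g.ofConv -
      LinearMap.mul' K A ∘ₗ TensorProduct.map f'.ofConv g'.ofConv) fun i hi a ha b hb ↦ ?_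
  simp [hf (hmono hi ha), hg (hmono (N.sub_le i) hb)]

lemma oneSubId_apply_eq_zero_of_mem_span_one {x : H} (hx : x ∈ Submodule.span K {(1 : H)}) :
    oneSubId K H x = 0 := by
  obtain ⟨c, rfl⟩ := Submodule.mem_span_singleton.mp hx
  simp [oneSubId, Algebra.smul_def]

lemma IsComulFiltered.oneSubId_pow_succ_apply_eq_zero (hmono : Monotone F)
    (hcomul : IsComulFiltered F) (hconn : F 0 = Submodule.span K {(1 : H)}) {N : ℕ} {x : H}
    (hx : x ∈ F N) : (oneSubId K H ^ (N + 1)) x = 0 := by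
  induction N generalizing x with
  | zero =>
    simpa only [zero_add, pow_one] using oneSubId_apply_eq_zero_of_mem_span_one (hconn ▸ hx)
  | succ N ih =>
    rw [pow_succ', LinearMap.convMul_apply]
    refine hcomul.map_comul_eq_zero hx (LinearMap.mul' K H ∘ₗ
      TensorProduct.map (oneSubId K H).ofConv (oneSubId K H ^ (N + 1)).ofConv)
      fun i hi a ha b hb ↦ ?_
    rcases Nat.eq_zero_or_pos i with rfl | hi0
    · simp only [LinearMap.comp_apply, TensorProduct.map_tmul, LinearMap.mul'_apply,
        oneSubId_apply_eq_zero_of_mem_span_one (hconn ▸ ha), zero_mul]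
    · simp [ih (hmono (by omega) hb)]

lemma IsComulFiltered.exists_eqOn_geom_sum_oneSubId (hmono : Monotone F)
    (hcover : ∀ x : H, ∃ n, x ∈ F n) (hcomul : IsComulFiltered F)
    (hconn : F 0 = Submodule.span K {(1 : H)}) :
    ∃ S : H →ₗ[K] H, ∀ N, Set.EqOn S
      (∑ k ∈ Finset.range (N + 1), oneSubId K H ^ k : WithConv (H →ₗ[K] H)).ofConv
      (F N) := by
  have hvanish {N k : ℕ} {x : H} (hx : x ∈ F N) (hk : k ∉ Finset.range (N + 1)) :
      (oneSubId K H ^ k) x = 0 := by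
    obtain ⟨j, rfl⟩ := Nat.exists_eq_add_of_lt (not_lt.mp (Finset.mem_range.not.mp hk))
    exact hcomul.oneSubId_pow_succ_apply_eq_zero hmono hconn (hmono (by omega) hx)
  have hfin (x : H) : (fun k ↦ (oneSubId K H ^ k) x).HasFiniteSupport := by
    obtain ⟨N, hx⟩ := hcover x
    refine (Finset.range (N + 1)).finite_toSet.subset fun k hk ↦ ?_
    by_contra h
    exact hk (hvanish hx h)
  refine ⟨LinearMap.locallyFiniteSum (fun k ↦ (oneSubId K H ^ k).ofConv) hfin,
    fun N x hx ↦ ?_⟩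
  rw [LinearMap.locallyFiniteSum_apply_eq_sum fun k hk ↦ hvanish hx hk, ofConv_sum]

lemma IsComulFiltered.mul_id_eq_one_and_id_mul_eq_one_of_eqOn_geom_sum (hmono : Monotone F)
    (hcover : ∀ x : H, ∃ n, x ∈ F n) (hcomul : IsComulFiltered F)
    (hconn : F 0 = Submodule.span K {(1 : H)}) {S : H →ₗ[K] H}
    (hS : ∀ N, Set.EqOn S
      (∑ k ∈ Finset.range (N + 1), oneSubId K H ^ k : WithConv (H →ₗ[K] H)).ofConv (F N)) :
    toConv S * toConv LinearMap.id = 1 ∧ toConv LinearMap.id * toConv S = 1 := by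
  have hid : toConv (LinearMap.id : H →ₗ[K] H) = 1 - oneSubId K H := by simp [oneSubId]
  have htrunc {N : ℕ} {x : H} (hx : x ∈ F N) :
      (1 - oneSubId K H ^ (N + 1)) x = (1 : WithConv (H →ₗ[K] H)) x := by
    simp [hcomul.oneSubId_pow_succ_apply_eq_zero hmono hconn hx]
  constructor <;> ext x <;> obtain ⟨N, hx⟩ := hcover x
  · calc (toConv S * toConv LinearMap.id).ofConv x
        = ((∑ k ∈ Finset.range (N + 1), oneSubId K H ^ k) * toConv LinearMap.id).ofConv x :=
          hcomul.convMul_apply_eq_of_eqOn hmono (hS N) (Set.eqOn_refl _ _) hx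
      _ = (1 : WithConv (H →ₗ[K] H)) x := by rw [hid, geom_sum_mul_neg, htrunc hx]
  · calc (toConv LinearMap.id * toConv S).ofConv x
        = (toConv LinearMap.id * ∑ k ∈ Finset.range (N + 1), oneSubId K H ^ k).ofConv x :=
          hcomul.convMul_apply_eq_of_eqOn hmono (Set.eqOn_refl _ _) (hS N) hx
      _ = (1 : WithConv (H →ₗ[K] H)) x := by rw [hid, mul_neg_geom_sum, htrunc hx]

end ConnectedFiltration

/-- every connected bialgebra is a Hopf algebra: the identity has a
convolution inverse `S` (the antipode), and on the augmentation ideal `ker ε` it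
satisfies `S x = -x - m ∘ (S ⊗ id) (Δ̃ x)` for the reduced coproduct
`Δ̃ x = Δ x - 1 ⊗ x - x ⊗ 1`. -/
theorem connected_bialgebra_hopf
    (F : ℕ → Submodule K H)
    (hmono : Monotone F)
    (hcover : ∀ x : H, ∃ n, x ∈ F n)
    (hcomul : ∀ n, ∀ x ∈ F n,
      Coalgebra.comul (R := K) x ∈
        ∑ i ∈ Finset.range (n + 1), tensorSub (F i) (F (n - i)))
    (hconn : F 0 = Submodule.span K {(1 : H)}) :
    ∃ S : H →ₗ[K] H,
      conv S LinearMap.id = convUnit ∧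
      conv LinearMap.id S = convUnit ∧
      ∀ x : H, Coalgebra.counit (R := K) x = 0 →
        S x = -x - (LinearMap.mul' K H)
          ((TensorProduct.map S LinearMap.id)
            (Coalgebra.comul (R := K) x - (1 : H) ⊗ₜ[K] x - x ⊗ₜ[K] (1 : H))) := by
  have hfilt : IsComulFiltered F := hcomul
  obtain ⟨S, hS⟩ := hfilt.exists_eqOn_geom_sum_oneSubId hmono hcover hconn
  obtain ⟨hleft, hright⟩ :=
    hfilt.mul_id_eq_one_and_id_mul_eq_one_of_eqOn_geom_sum hmono hcover hconn hS
  exact ⟨S, congr(ofConv $hleft), congr(ofConv $hright),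
    fun x hx ↦ apply_eq_neg_sub_mul'_map_reducedComul hleft hx⟩
end

section
/- For the antipode S of a Hopf algebra H and any Hochschild 1-cocycle L (satisfying Δ∘L = (id ⊗ L)∘Δ + L ⊗ 1), one has S ∘ L = −S ⋆ L, i.e. S(L(x)) = −Σ S(x₁)L(x₂) for all x. -/
open TensorProduct

variable {K : Type*} [Field K]
variable {H : Type*} [Ring H] [HopfAlgebra K H]

/-- Applying `ε ⊗ id` to the cocycle identity `Δ (L x) = (id ⊗ L) (Δ x) + L x ⊗ u` kills
everything except `ε (L x) • u`. -/
theorem Coalgebra.counit_smul_eq_zero_of_comul_eq {R C : Type*} [CommRing R] [AddCommGroup C]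
    [Module R C] [Coalgebra R C] (L : C →ₗ[R] C) (u : C)
    (hL : ∀ x : C, Coalgebra.comul (R := R) (L x) =
      L.lTensor C (Coalgebra.comul (R := R) x) + L x ⊗ₜ[R] u)
    (x : C) : Coalgebra.counit (R := R) (L x) • u = 0 := by
  have h := congrArg (LinearMap.rTensor C (Coalgebra.counit (R := R))) (hL x)
  rw [Coalgebra.rTensor_counit_comul, map_add, LinearMap.rTensor_tmul,
    ← LinearMap.comp_apply, LinearMap.rTensor_comp_lTensor, ← LinearMap.lTensor_comp_rTensor,
    LinearMap.comp_apply, Coalgebra.rTensor_counit_comul, LinearMap.lTensor_tmul,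
    left_eq_add] at h
  simpa using congrArg (TensorProduct.lid R C) h

/-- for the antipode `S` of a Hopf algebra and any Hochschild
1-cocycle `L` (i.e. `Δ(L x) = (id ⊗ L)(Δ x) + L x ⊗ 1`), one has
`S ∘ L = -(S ⋆ L)`, i.e. `S (L x) = - m ∘ (S ⊗ L) (Δ x)` for all `x`. -/
theorem antipode_comp_cocycle
    (L : H →ₗ[K] H)
    (hL : ∀ x : H, Coalgebra.comul (R := K) (L x) =
      (TensorProduct.map LinearMap.id L) (Coalgebra.comul (R := K) x) +
        L x ⊗ₜ[K] (1 : H)) :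
    ∀ x : H, HopfAlgebra.antipode (R := K) (L x) =
      -(LinearMap.mul' K H)
        ((TensorProduct.map (HopfAlgebra.antipode (R := K)) L)
          (Coalgebra.comul (R := K) x)) := by
  intro x
  have hcounit : algebraMap K H (Coalgebra.counit (R := K) (L x)) = 0 := by
    rw [Algebra.algebraMap_eq_smul_one]
    exact Coalgebra.counit_smul_eq_zero_of_comul_eq L 1 hL x
  -- `m ∘ (S ⊗ id)` sends `Δ (L x)` to `ε (L x) • 1 = 0`, and the right side to `(S ⋆ L) x + S (L x)`.
  have h := congrArg (fun t => LinearMap.mul' K H ((HopfAlgebra.antipode (R := K)).rTensor H t))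
    (hL x)
  rw [map_add, map_add, HopfAlgebra.mul_antipode_rTensor_comul_apply, hcounit,
    ← LinearMap.lTensor_def, ← LinearMap.comp_apply (LinearMap.rTensor H _),
    LinearMap.rTensor_comp_lTensor, LinearMap.rTensor_tmul, LinearMap.mul'_apply, mul_one] at h
  exact eq_neg_of_add_eq_zero_right h.symm
end

section
/- The coproduct on the Hopf algebra of rooted trees defined by Δ ∘ B₊ = B₊ ⊗ 1 + (id ⊗ B₊) ∘ Δ (extended as an algebra morphism) is coassociative. -/
/-- Planar rooted trees. -/
inductive RTree : Type where
  | node : List RTree → RTree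

open TensorProduct

variable (K : Type) [Field K]

/-- The algebra of rooted trees: the monoid algebra on the free monoid of
rooted trees (with basis the rooted forests). -/
abbrev HTrees := MonoidAlgebra K (FreeMonoid RTree)

/-- The grafting operator `B₊`, sending a forest to the tree obtained by
attaching all its roots to a new common root. -/
noncomputable def Bplus : HTrees K →ₗ[K] HTrees K :=
  MonoidAlgebra.mapDomainLinearMap K K
    (fun f : FreeMonoid RTree => FreeMonoid.of (RTree.node (FreeMonoid.toList f)))

/-! Both sides of the coassociativity identity are algebra morphisms out of `H_R`, which is
generated by trees, and every tree is `B₊` of a forest, i.e. of a product of smaller trees.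
So it suffices that coassociativity at `a` propagates to `B₊ a`. This holds for any 1-cocycle
`B` of a coproduct with `Δ 1 = 1 ⊗ 1`: expanding `Δ (B a)` by the cocycle identity, the terms
`B a ⊗ 1 ⊗ 1` agree, the terms `(id ⊗ B ⊗ 1) (Δ a)` agree, and the remaining ones are
`id ⊗ id ⊗ B` applied to the two sides of coassociativity at `a`. -/

namespace TensorProduct

variable {R M N P Q : Type*} [CommSemiring R] [AddCommMonoid M] [AddCommMonoid N]
  [AddCommMonoid P] [AddCommMonoid Q] [Module R M] [Module R N] [Module R P] [Module R Q]

lemma assoc_map_id_tmul (f : N →ₗ[R] P) (u : M ⊗[R] N) (q : Q) :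
    TensorProduct.assoc R M P Q (map LinearMap.id f u ⊗ₜ q) =
      map LinearMap.id ((mk R P Q).flip q ∘ₗ f) u := by
  induction u with
  | zero => simp
  | tmul m n => simp
  | add u v hu hv => simp only [map_add, add_tmul, hu, hv]

lemma assoc_map_map_id (f : M →ₗ[R] N ⊗[R] P) (g : Q →ₗ[R] Q) (u : M ⊗[R] Q) :
    TensorProduct.assoc R N P Q (map f g u) =
      map LinearMap.id (map LinearMap.id g)
        (TensorProduct.assoc R N P Q (map f LinearMap.id u)) := by
  rw [map_map_assoc, ← LinearMap.comp_apply (map _ g), ← map_comp, map_id]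
  rfl

end TensorProduct

section Cocycle

variable {R A : Type*} [CommSemiring R] [Semiring A] [Algebra R A]

theorem coassoc_apply_of_cocycle (Δ : A →ₗ[R] A ⊗[R] A) (B : A →ₗ[R] A)
    (hΔ₁ : Δ 1 = 1 ⊗ₜ 1)
    (hB : ∀ a, Δ (B a) = B a ⊗ₜ 1 + map LinearMap.id B (Δ a)) {a : A}
    (ha : TensorProduct.assoc R A A A (map Δ LinearMap.id (Δ a)) = map LinearMap.id Δ (Δ a)) :
    TensorProduct.assoc R A A A (map Δ LinearMap.id (Δ (B a))) =
      map LinearMap.id Δ (Δ (B a)) := by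
  have hΔB : Δ ∘ₗ B = (mk R A A).flip 1 ∘ₗ B + map LinearMap.id B ∘ₗ Δ :=
    LinearMap.ext hB
  have hleft : map Δ LinearMap.id (map LinearMap.id B (Δ a)) = map Δ B (Δ a) := by
    rw [← LinearMap.comp_apply, ← map_comp, LinearMap.id_comp, LinearMap.comp_id]
  have hright : map LinearMap.id Δ (map LinearMap.id B (Δ a)) =
      map LinearMap.id ((mk R A A).flip 1 ∘ₗ B) (Δ a) +
        map LinearMap.id (map LinearMap.id B) (map LinearMap.id Δ (Δ a)) := by
    rw [← LinearMap.comp_apply (map _ Δ), ← map_comp, LinearMap.id_comp, hΔB, map_add_right,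
      LinearMap.add_apply, ← LinearMap.comp_apply (map _ (map _ B)), ← map_comp,
      LinearMap.id_comp]
  rw [hB a, map_add, map_add, map_add, map_tmul, map_tmul, hB a, add_tmul, map_add, assoc_tmul,
    hleft, assoc_map_id_tmul, assoc_map_map_id, ha, hright, LinearMap.id_apply,
    LinearMap.id_apply, hΔ₁]
  abel

end Cocycle

lemma Bplus_single (m : FreeMonoid RTree) (c : K) :
    Bplus K (MonoidAlgebra.single m c) =
      MonoidAlgebra.single (FreeMonoid.of (RTree.node (FreeMonoid.toList m))) c :=
  MonoidAlgebra.mapDomainLinearMap_single _ _ _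

section Induction

variable {K} {T : Type*} [Semiring T] [Algebra K T] {F G : HTrees K →ₐ[K] T}

theorem HTrees.algHom_eq_single_ofList (hB : ∀ a, F a = G a → F (Bplus K a) = G (Bplus K a)) :
    ∀ l : List RTree, F (MonoidAlgebra.single (FreeMonoid.ofList l) 1) =
      G (MonoidAlgebra.single (FreeMonoid.ofList l) 1)
  | [] => by simp [← MonoidAlgebra.one_def]
  | .node l' :: l => by
    have htree : MonoidAlgebra.single (FreeMonoid.of (RTree.node l')) (1 : K) =
        Bplus K (MonoidAlgebra.single (FreeMonoid.ofList l') 1) := by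
      rw [Bplus_single, FreeMonoid.toList_ofList]
    rw [FreeMonoid.ofList_cons, ← one_mul (1 : K), ← MonoidAlgebra.single_mul_single, map_mul,
      map_mul, HTrees.algHom_eq_single_ofList hB l, htree,
      hB _ (HTrees.algHom_eq_single_ofList hB l')]

theorem HTrees.algHom_ext_of_Bplus (hB : ∀ a, F a = G a → F (Bplus K a) = G (Bplus K a)) :
    F = G :=
  MonoidAlgebra.algHom_ext (fun m => HTrees.algHom_eq_single_ofList hB m.toList)
    (Subsingleton.elim _ _)

end Induction

/-- the coproduct on the Hopf algebra of rooted trees, i.e. the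
algebra morphism `Δ : H_R → H_R ⊗ H_R` determined by
`Δ ∘ B₊ = B₊ ⊗ 1 + (id ⊗ B₊) ∘ Δ`, is coassociative. -/
theorem rooted_trees_coassoc
    (Δ : HTrees K →ₐ[K] (HTrees K ⊗[K] HTrees K))
    (hΔ : ∀ a : HTrees K,
      Δ (Bplus K a) = (Bplus K a) ⊗ₜ[K] (1 : HTrees K) +
        (TensorProduct.map LinearMap.id (Bplus K)) (Δ a)) :
    ∀ a : HTrees K,
      (TensorProduct.assoc K (HTrees K) (HTrees K) (HTrees K))
          ((TensorProduct.map Δ.toLinearMap LinearMap.id) (Δ a)) =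
        (TensorProduct.map LinearMap.id Δ.toLinearMap) (Δ a) := by
  have hcoassoc :
      (Algebra.TensorProduct.assoc K K K _ _ _).toAlgHom.comp
          ((Algebra.TensorProduct.map Δ (AlgHom.id K _)).comp Δ) =
        (Algebra.TensorProduct.map (AlgHom.id K _) Δ).comp Δ :=
    HTrees.algHom_ext_of_Bplus fun a ha =>
      coassoc_apply_of_cocycle Δ.toLinearMap (Bplus K) (map_one Δ) hΔ ha
  exact fun a => DFunLike.congr_fun hcoassoc a
end

section
/- The operator ∫₀ of antidifferentiation (x^n ↦ x^{n+1}/(n+1)) is a Hochschild 1-cocycle on the polynomial Hopf algebra K[x]: Δ ∘ ∫₀ = (id ⊗ ∫₀) ∘ Δ + ∫₀ ⊗ 1. Moreover, every Hochschild 1-cocycle on K[x] is uniquely a sum λ·∫₀ + ∂α for a scalar λ and a functional α, so the first Hochschild cohomology HH¹_ε(K[x]) is one-dimensional. -/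
open TensorProduct Polynomial

variable (K : Type) [Field K] [CharZero K]

/-- The Hochschild coboundary `∂α = (id ⊗ α) ∘ Δ - α(·)·1` of a functional `α`
on the polynomial Hopf algebra. -/
noncomputable def coboundary (D : K[X] →ₐ[K] (K[X] ⊗[K] K[X]))
    (α : K[X] →ₗ[K] K) : K[X] →ₗ[K] K[X] :=
  (TensorProduct.rid K K[X]).toLinearMap ∘ₗ
      (TensorProduct.map LinearMap.id α) ∘ₗ D.toLinearMap -
    (LinearMap.toSpanSingleton K K[X] 1) ∘ₗ α

/-!
A cocycle `L` is determined by the functional `p ↦ (L p).coeff 1`. Indeed `Δ p = p(x + y)`, so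
applying `coeff₀ ⊗ id` and `coeff₁ ⊗ id` to the cocycle identity gives `(L p)(0) = 0` and
`(L p)' = L p' + (L p).coeff 1`; in characteristic zero a polynomial is determined by its
derivative and its constant term, and induction on the degree does the rest. For `λ • ∫₀ + ∂α`
this functional is `p ↦ λ p(0) + α p'`, and every functional `φ` is uniquely of that form, with
`λ = φ 1` and `α = φ ∘ ∫₀`. That `∂α` is a cocycle is coassociativity of `Δ`; that `∫₀` is one is
the identity `C(n+1, i) / (n+1) = C(n, i) / (j+1)` for `i + j = n`.
-/

section TensorProduct

variable {R M N P : Type*} [CommSemiring R] [AddCommMonoid M] [Module R M] [AddCommMonoid N]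
  [Module R N] [AddCommMonoid P] [Module R P]

theorem lid_rTensor_lTensor (f : M →ₗ[R] R) (g : N →ₗ[R] P) (t : M ⊗[R] N) :
    TensorProduct.lid R P (f.rTensor P (g.lTensor M t)) =
      g (TensorProduct.lid R N (f.rTensor N t)) := by
  induction t using TensorProduct.induction_on with
  | zero => simp
  | tmul m n => simp
  | add s t hs ht => simp [hs, ht]

theorem apply_rid_lTensor_eq_apply_lid_rTensor (f : M →ₗ[R] R) (g : N →ₗ[R] R) (t : M ⊗[R] N) :
    f (TensorProduct.rid R M (g.lTensor M t)) = g (TensorProduct.lid R N (f.rTensor N t)) := by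
  induction t using TensorProduct.induction_on with
  | zero => simp
  | tmul m n => simp [mul_comm]
  | add s t hs ht => simp [hs, ht]

end TensorProduct

section Cocycles

variable {R A : Type*} [CommSemiring R] [Semiring A] [Algebra R A] (D : A →ₐ[R] (A ⊗[R] A))

def cocycles : Submodule R (A →ₗ[R] A) where
  carrier := {L | ∀ a, D (L a) = TensorProduct.map LinearMap.id L (D a) + L a ⊗ₜ[R] (1 : A)}
  zero_mem' a := by simp
  add_mem' {L M} hL hM a := by
    simp only [Set.mem_ofPred_eq] at *
    simp only [LinearMap.add_apply, map_add, hL, hM, TensorProduct.map_add_right,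
      TensorProduct.add_tmul]
    abel
  smul_mem' c L hL a := by
    simp only [Set.mem_ofPred_eq] at *
    simp [hL, TensorProduct.map_smul_right, TensorProduct.smul_tmul']

variable {D}

theorem lid_rTensor_comul_of_mem_cocycles {L : A →ₗ[R] A} (hL : L ∈ cocycles D)
    (f : A →ₗ[R] R) (a : A) :
    TensorProduct.lid R A (f.rTensor A (D (L a))) =
      L (TensorProduct.lid R A (f.rTensor A (D a))) + f (L a) • 1 := by
  rw [hL a, map_add, map_add, ← LinearMap.lTensor, lid_rTensor_lTensor]
  simp

end Cocycles

open Finset.HasAntidiagonal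

section CommSemiring

variable {R : Type*} [CommSemiring R] {D : R[X] →ₐ[R] (R[X] ⊗[R] R[X])}

theorem linearMap_apply_eq_of_X_pow {M : Type*} [AddCommMonoid M] [Module R M]
    (f g : R[X] →ₗ[R] M) (h : ∀ n, f (X ^ n) = g (X ^ n)) (p : R[X]) : f p = g p := by
  congr 1
  exact (basisMonomials R).ext fun n ↦ by simpa [← X_pow_eq_monomial] using h n

theorem comul_X_pow (hD : D X = X ⊗ₜ 1 + 1 ⊗ₜ X) (n : ℕ) :
    D (X ^ n) =
      ∑ x ∈ antidiagonal n, (n.choose x.1 : R) • ((X ^ x.1 : R[X]) ⊗ₜ[R] (X ^ x.2 : R[X])) := by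
  rw [map_pow, hD, (Commute.all _ _).add_pow']
  simp [Algebra.TensorProduct.tmul_pow, Nat.cast_smul_eq_nsmul]

theorem lid_rTensor_comul_X_pow (hD : D X = X ⊗ₜ 1 + 1 ⊗ₜ X) (f : R[X] →ₗ[R] R) (n : ℕ) :
    TensorProduct.lid R R[X] (f.rTensor R[X] (D (X ^ n))) =
      ∑ x ∈ antidiagonal n, ((n.choose x.1 : R) * f (X ^ x.1)) • X ^ x.2 := by
  rw [comul_X_pow hD]
  simp [mul_smul]

theorem lid_rTensor_lcoeff_zero_comul (hD : D X = X ⊗ₜ 1 + 1 ⊗ₜ X) (p : R[X]) :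
    TensorProduct.lid R R[X] ((lcoeff R 0).rTensor R[X] (D p)) = p := by
  refine linearMap_apply_eq_of_X_pow (TensorProduct.lid R R[X] ∘ₗ (lcoeff R 0).rTensor R[X] ∘ₗ
    D.toLinearMap) LinearMap.id (fun n ↦ ?_) p
  simp only [LinearMap.comp_apply, AlgHom.toLinearMap_apply, LinearEquiv.coe_coe]
  rw [lid_rTensor_comul_X_pow hD, Finset.sum_eq_single (0, n)]
  · simp
  · rintro ⟨a, b⟩ hab hne
    rw [mem_antidiagonal] at hab
    rw [ne_eq, Prod.mk.injEq] at hne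
    simp [coeff_X_pow]
    omega
  · simp

theorem lid_rTensor_lcoeff_one_comul (hD : D X = X ⊗ₜ 1 + 1 ⊗ₜ X) (p : R[X]) :
    TensorProduct.lid R R[X] ((lcoeff R 1).rTensor R[X] (D p)) = derivative p := by
  refine linearMap_apply_eq_of_X_pow (TensorProduct.lid R R[X] ∘ₗ (lcoeff R 1).rTensor R[X] ∘ₗ
    D.toLinearMap) derivative (fun n ↦ ?_) p
  simp only [LinearMap.comp_apply, AlgHom.toLinearMap_apply, LinearEquiv.coe_coe]
  rw [lid_rTensor_comul_X_pow hD]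
  rcases n with _ | n
  · simp
  rw [Finset.sum_eq_single (1, n)]
  · simp [smul_eq_C_mul]
  · rintro ⟨a, b⟩ hab hne
    rw [mem_antidiagonal] at hab
    rw [ne_eq, Prod.mk.injEq] at hne
    simp [coeff_X_pow]
    omega
  · simp [add_comm]

theorem comul_coassoc (hD : D X = X ⊗ₜ 1 + 1 ⊗ₜ X) (p : R[X]) :
    TensorProduct.assoc R R[X] R[X] R[X] (D.toLinearMap.rTensor R[X] (D p)) =
      D.toLinearMap.lTensor R[X] (D p) := by
  have h : (Algebra.TensorProduct.assoc R R R R[X] R[X] R[X]).toAlgHom.comp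
      ((Algebra.TensorProduct.map D (AlgHom.id R R[X])).comp D) =
      (Algebra.TensorProduct.map (AlgHom.id R R[X]) D).comp D :=
    algHom_ext (by simp [hD, Algebra.TensorProduct.one_def, TensorProduct.tmul_add,
      TensorProduct.add_tmul, add_assoc])
  exact congrArg (· p) h

end CommSemiring

section CommRing

variable {R : Type*} [CommRing R] {D : R[X] →ₐ[R] (R[X] ⊗[R] R[X])} {L : R[X] →ₗ[R] R[X]}

theorem coeff_zero_of_mem_cocycles (hD : D X = X ⊗ₜ 1 + 1 ⊗ₜ X) (hL : L ∈ cocycles D)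
    (p : R[X]) : (L p).coeff 0 = 0 := by
  have h := lid_rTensor_comul_of_mem_cocycles hL (lcoeff R 0) p
  rw [lid_rTensor_lcoeff_zero_comul hD, lid_rTensor_lcoeff_zero_comul hD, left_eq_add] at h
  simpa using congrArg (coeff · 0) h

theorem derivative_apply_of_mem_cocycles (hD : D X = X ⊗ₜ 1 + 1 ⊗ₜ X) (hL : L ∈ cocycles D)
    (p : R[X]) : derivative (L p) = L (derivative p) + C ((L p).coeff 1) := by
  have h := lid_rTensor_comul_of_mem_cocycles hL (lcoeff R 1) p
  rwa [lid_rTensor_lcoeff_one_comul hD, lid_rTensor_lcoeff_one_comul hD, smul_eq_C_mul,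
    mul_one] at h

theorem eq_of_mem_cocycles [IsAddTorsionFree R] (hD : D X = X ⊗ₜ 1 + 1 ⊗ₜ X)
    {M : R[X] →ₗ[R] R[X]} (hL : L ∈ cocycles D) (hM : M ∈ cocycles D)
    (h : ∀ p, (L p).coeff 1 = (M p).coeff 1) : L = M := by
  have hLM := sub_mem hL hM
  suffices ∀ n, (L - M) (X ^ n) = 0 from
    sub_eq_zero.mp (linearMap_apply_eq_of_X_pow _ 0 this |> LinearMap.ext)
  have derivative_comm (p : R[X]) : derivative ((L - M) p) = (L - M) (derivative p) := by
    rw [derivative_apply_of_mem_cocycles hD hLM]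
    simp [h]
  have eq_zero_of_derivative {p : R[X]} (hp : derivative ((L - M) p) = 0) : (L - M) p = 0 := by
    rw [eq_C_of_derivative_eq_zero hp, coeff_zero_of_mem_cocycles hD hLM, C_0]
  intro n
  induction n with
  | zero =>
    exact eq_zero_of_derivative (by rw [derivative_comm, pow_zero, derivative_one, map_zero])
  | succ n ih =>
    refine eq_zero_of_derivative ?_
    rw [derivative_comm, derivative_X_pow, ← smul_eq_C_mul, map_smul, Nat.add_sub_cancel, ih,
      smul_zero]

end CommRing

theorem Nat.inv_succ_mul_choose_succ {F : Type*} [Field F] [CharZero F] {i j n : ℕ}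
    (h : i + j = n) :
    ((n : F) + 1)⁻¹ * (n + 1).choose i = n.choose i * ((j : F) + 1)⁻¹ := by
  have key := Nat.choose_mul_succ_eq n i
  rw [show n + 1 - i = j + 1 by omega] at key
  have key' : (n.choose i : F) * (n + 1) = (n + 1).choose i * (j + 1) := by exact_mod_cast key
  field_simp
  linear_combination key'.symm

section Integral

variable {F : Type*} [Field F] [CharZero F] {D : F[X] →ₐ[F] (F[X] ⊗[F] F[X])} {I : F[X] →ₗ[F] F[X]}

theorem coeff_one_integral (hI : ∀ n : ℕ, I (X ^ n) = C (((n : F) + 1)⁻¹) * X ^ (n + 1))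
    (p : F[X]) : (I p).coeff 1 = p.coeff 0 := by
  refine linearMap_apply_eq_of_X_pow (lcoeff F 1 ∘ₗ I) (lcoeff F 0) (fun n ↦ ?_) p
  simp only [LinearMap.comp_apply, hI]
  rcases n with _ | n <;> simp [coeff_X_pow]

theorem derivative_integral (hI : ∀ n : ℕ, I (X ^ n) = C (((n : F) + 1)⁻¹) * X ^ (n + 1))
    (p : F[X]) : derivative (I p) = p := by
  refine linearMap_apply_eq_of_X_pow (derivative ∘ₗ I) LinearMap.id (fun n ↦ ?_) p
  rw [LinearMap.comp_apply, hI, derivative_C_mul_X_pow]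
  simp [Nat.cast_add_one_ne_zero]

theorem integral_derivative (hI : ∀ n : ℕ, I (X ^ n) = C (((n : F) + 1)⁻¹) * X ^ (n + 1))
    (p : F[X]) : I (derivative p) = p - C (p.coeff 0) := by
  refine linearMap_apply_eq_of_X_pow (I ∘ₗ derivative) (LinearMap.id - monomial 0 ∘ₗ lcoeff F 0)
    (fun n ↦ ?_) p
  rcases n with _ | n
  · simp
  · rw [LinearMap.comp_apply, derivative_X_pow, ← smul_eq_C_mul, map_smul, Nat.add_sub_cancel,
      hI, smul_eq_C_mul, ← mul_assoc, ← C_mul]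
    simp [Nat.cast_add_one_ne_zero]

theorem integral_mem_cocycles (hD : D X = X ⊗ₜ 1 + 1 ⊗ₜ X)
    (hI : ∀ n : ℕ, I (X ^ n) = C (((n : F) + 1)⁻¹) * X ^ (n + 1)) : I ∈ cocycles D := by
  refine linearMap_apply_eq_of_X_pow (D.toLinearMap ∘ₗ I)
    (I.lTensor F[X] ∘ₗ D.toLinearMap + (TensorProduct.mk F F[X] F[X]).flip 1 ∘ₗ I) (fun n ↦ ?_)
  simp only [LinearMap.comp_apply, LinearMap.add_apply, AlgHom.toLinearMap_apply,
    LinearMap.flip_apply, TensorProduct.mk_apply]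
  rw [hI, ← smul_eq_C_mul, map_smul, comul_X_pow hD, comul_X_pow hD,
    Finset.Nat.sum_antidiagonal_succ', smul_add, add_comm, map_sum, Finset.smul_sum]
  congr 1
  · refine Finset.sum_congr rfl fun ⟨i, j⟩ hij ↦ ?_
    rw [mem_antidiagonal] at hij
    simp [hI, smul_smul, ← smul_eq_C_mul, Nat.inv_succ_mul_choose_succ hij]
  · simp [TensorProduct.smul_tmul']

end Integral

section Coboundary

variable {F : Type} [Field F] {D : F[X] →ₐ[F] (F[X] ⊗[F] F[X])}

theorem coboundary_mem_cocycles (hD : D X = X ⊗ₜ 1 + 1 ⊗ₜ X) (α : F[X] →ₗ[F] F) :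
    coboundary F D α ∈ cocycles D := by
  set ρ : F[X] ⊗[F] F[X] →ₗ[F] F[X] := (TensorProduct.rid F F[X]).toLinearMap ∘ₗ α.lTensor F[X]
  have comul_comp : D.toLinearMap ∘ₗ ρ =
      ρ.lTensor F[X] ∘ₗ (TensorProduct.assoc F F[X] F[X] F[X]).toLinearMap ∘ₗ
        D.toLinearMap.rTensor F[X] := by
    refine TensorProduct.ext' fun a b ↦ ?_
    simp only [ρ, LinearMap.comp_apply, LinearMap.lTensor_tmul, LinearEquiv.coe_coe,
      TensorProduct.rid_tmul, AlgHom.toLinearMap_apply, LinearMap.rTensor_tmul, map_smul]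
    induction D a using TensorProduct.induction_on with
    | zero => simp
    | tmul x y => simp [TensorProduct.smul_tmul']
    | add s t hs ht => simp [hs, ht, TensorProduct.add_tmul]
  have lTensor_toSpanSingleton_comp (t : F[X] ⊗[F] F[X]) :
      (LinearMap.toSpanSingleton F F[X] 1 ∘ₗ α).lTensor F[X] t = ρ t ⊗ₜ 1 := by
    induction t using TensorProduct.induction_on with
    | zero => simp
    | tmul a b => simp [ρ, TensorProduct.smul_tmul]
    | add s t hs ht => simp [hs, ht, TensorProduct.add_tmul]
  intro p
  have comul_ρ_comul : D (ρ (D p)) = (ρ ∘ₗ D.toLinearMap).lTensor F[X] (D p) := by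
    rw [LinearMap.lTensor_comp_apply, ← comul_coassoc hD]
    exact LinearMap.congr_fun comul_comp (D p)
  change D (ρ (D p) - α p • 1) =
    (ρ ∘ₗ D.toLinearMap - _).lTensor F[X] (D p) + (ρ (D p) - α p • 1) ⊗ₜ 1
  rw [map_sub, map_smul, map_one, comul_ρ_comul, LinearMap.lTensor_sub, LinearMap.sub_apply,
    lTensor_toSpanSingleton_comp, TensorProduct.sub_tmul, ← TensorProduct.smul_tmul',
    Algebra.TensorProduct.one_def]
  abel

theorem coeff_one_coboundary (hD : D X = X ⊗ₜ 1 + 1 ⊗ₜ X) (α : F[X] →ₗ[F] F) (p : F[X]) :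
    (coboundary F D α p).coeff 1 = α (derivative p) := by
  have h := apply_rid_lTensor_eq_apply_lid_rTensor (lcoeff F 1) α (D p)
  rw [lid_rTensor_lcoeff_one_comul hD] at h
  rw [← h]
  simp [coboundary, LinearMap.lTensor, coeff_one]

end Coboundary

/-- on the polynomial Hopf algebra `K[x]` (with `x` primitive, so
the coproduct is the algebra morphism `D` with `D x = x ⊗ 1 + 1 ⊗ x`), the
antidifferentiation operator `∫₀ : xⁿ ↦ xⁿ⁺¹/(n+1)` is a Hochschild 1-cocycle,
and every Hochschild 1-cocycle `L` is uniquely of the form `λ·∫₀ + ∂α`; hence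
`HH¹_ε(K[x])` is one-dimensional. -/
theorem polynomial_cocycles
    (D : K[X] →ₐ[K] (K[X] ⊗[K] K[X]))
    (hD : D X = X ⊗ₜ[K] (1 : K[X]) + (1 : K[X]) ⊗ₜ[K] X)
    (I : K[X] →ₗ[K] K[X])
    (hI : ∀ n : ℕ, I (X ^ n) = C (((n : K) + 1)⁻¹) * X ^ (n + 1)) :
    -- `∫₀` is a Hochschild 1-cocycle
    (∀ p : K[X], D (I p) =
      (TensorProduct.map LinearMap.id I) (D p) + I p ⊗ₜ[K] (1 : K[X])) ∧
    -- every 1-cocycle is uniquely `λ·∫₀ + ∂α`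
    (∀ L : K[X] →ₗ[K] K[X],
      (∀ p : K[X], D (L p) =
        (TensorProduct.map LinearMap.id L) (D p) + L p ⊗ₜ[K] (1 : K[X])) →
      ∃! c : K × (K[X] →ₗ[K] K), L = c.1 • I + coboundary K D c.2) := by
  have hI_mem : I ∈ cocycles D := integral_mem_cocycles hD hI
  have coeff_one_apply (μ : K) (β : K[X] →ₗ[K] K) (p : K[X]) :
      ((μ • I + coboundary K D β) p).coeff 1 = μ * p.coeff 0 + β (derivative p) := by
    simp [coeff_one_integral hI, coeff_one_coboundary hD]
  refine ⟨hI_mem, fun L hL ↦ ⟨((L 1).coeff 1, lcoeff K 1 ∘ₗ L ∘ₗ I), ?_, ?_⟩⟩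
  · refine eq_of_mem_cocycles hD hL
      (add_mem (Submodule.smul_mem _ _ hI_mem) (coboundary_mem_cocycles hD _)) fun p ↦ ?_
    rw [coeff_one_apply, LinearMap.comp_apply, LinearMap.comp_apply, integral_derivative hI,
      ← mul_one (C _), ← smul_eq_C_mul, map_sub, map_smul]
    simp only [lcoeff_apply, coeff_sub, coeff_smul, smul_eq_mul]
    ring
  · rintro ⟨μ, β⟩ rfl
    refine Prod.ext ?_ (LinearMap.ext fun p ↦ ?_)
    · simpa using (coeff_one_apply μ β 1).symm
    · simpa [coeff_zero_of_mem_cocycles hD hI_mem, derivative_integral hI] using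
        (coeff_one_apply μ β (I p)).symm
end
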